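/- arXiv:2302.08014 — 3 statements merged into one kernel-verified Lean document; each statement's English description precedes it below -/
import Mathlib

section
/- With the hypotheses of the previous setup (Dω = Dη·DG, F(U) = aU + bG(U), H(U) = aη(U) + bω(U)), if additionally the Jacobian DF(U) = aI + b DG(U) is invertible at U, then the gradient of H with respect to F equals the gradient of η with respect to U; that is, ∇H(U)ᵀ (DF(U))^{-1} = ∇η(U)ᵀ. -/
/-!
Differentiating `F = a U + b G(U)` and `H = a η + b ω` gives `DF = a I + b DG` and
`DH = a Dη + b Dω`; the compatibility `Dω = Dη ∘ DG` turns the latter into `DH = Dη ∘ DF`,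
and composing with `DF⁻¹` leaves `Dη`.
-/

section

variable {𝕜 E F : Type*} [NontriviallyNormedField 𝕜]
  [NormedAddCommGroup E] [NormedSpace 𝕜 E] [NormedAddCommGroup F] [NormedSpace 𝕜 F]

theorem HasFDerivAt.const_smul_add_const_smul {f g : E → F} {f' g' : E →L[𝕜] F} {x : E}
    (hf : HasFDerivAt f f' x) (hg : HasFDerivAt g g' x) (a b : 𝕜) :
    HasFDerivAt (fun y => a • f y + b • g y) (a • f' + b • g') x :=
  (hf.const_smul a).add (hg.const_smul b)

theorem hasFDerivAt_smul_add_smul_eq_comp {η ω : E → F} {η' : E →L[𝕜] F} {G' : E →L[𝕜] E}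
    {x : E} (hη : HasFDerivAt η η' x) (hω : HasFDerivAt ω (η'.comp G') x) (a b : 𝕜) :
    HasFDerivAt (fun y => a • η y + b • ω y) (η'.comp (a • .id 𝕜 E + b • G')) x := by
  convert hη.const_smul_add_const_smul hω a b using 1
  simp only [ContinuousLinearMap.comp_add, ContinuousLinearMap.comp_smul,
    ContinuousLinearMap.comp_id]

theorem ContinuousLinearMap.comp_comp_symm (η' : E →L[𝕜] F) (L : E ≃L[𝕜] E) :
    (η'.comp (L : E →L[𝕜] E)).comp (L.symm : E →L[𝕜] E) = η' := by
  rw [ContinuousLinearMap.comp_assoc, L.coe_comp_coe_symm, ContinuousLinearMap.comp_id]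

end

/-- Lemma 5.1 of the paper (single velocity / single direction):
with `Dω = Dη ∘ DG`, `F(U) = aU + bG(U)`, `H(U) = aη(U) + bω(U)`,
if the Jacobian `DF(U)` is invertible at `U` (realised as a continuous
linear equivalence `L`), then `∇H(U)ᵀ (DF(U))⁻¹ = ∇η(U)ᵀ`. -/
theorem stmt_3 {p : ℕ} (η ω : (Fin p → ℝ) → ℝ)
    (G : (Fin p → ℝ) → (Fin p → ℝ)) (a b : ℝ)
    (hη : Differentiable ℝ η) (hω : Differentiable ℝ ω)
    (hG : Differentiable ℝ G)
    (hcompat : ∀ U, fderiv ℝ ω U = (fderiv ℝ η U).comp (fderiv ℝ G U))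
    (F : (Fin p → ℝ) → (Fin p → ℝ)) (hF : F = fun U => a • U + b • G U)
    (H : (Fin p → ℝ) → ℝ) (hH : H = fun U => a * η U + b * ω U)
    (U : Fin p → ℝ) (L : (Fin p → ℝ) ≃L[ℝ] (Fin p → ℝ))
    (hL : (L : (Fin p → ℝ) →L[ℝ] (Fin p → ℝ)) = fderiv ℝ F U) :
    (fderiv ℝ H U).comp (L.symm : (Fin p → ℝ) →L[ℝ] (Fin p → ℝ)) =
      fderiv ℝ η U := by
  have hDF : HasFDerivAt F (a • .id ℝ _ + b • fderiv ℝ G U) U := by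
    subst hF
    exact (hasFDerivAt_id U).const_smul_add_const_smul (hG U).hasFDerivAt a b
  have hDω : HasFDerivAt ω ((fderiv ℝ η U).comp (fderiv ℝ G U)) U :=
    hcompat U ▸ (hω U).hasFDerivAt
  have hDH : HasFDerivAt H ((fderiv ℝ η U).comp (fderiv ℝ F U)) U := by
    simp only [hH, ← smul_eq_mul, hDF.fderiv]
    exact hasFDerivAt_smul_add_smul_eq_comp (hη U).hasFDerivAt hDω a b
  rw [hDH.fderiv, ← hL, ContinuousLinearMap.comp_comp_symm]
end

section
/- Semi-discrete entropy equality: consider the ODE system d/dt F_i = −(1/Δx)(f*_{i+1/2} − f*_{i−1/2}) where F_i = F(V_i(t)) and V_i is the entropy variable at cell i, with H a convex function of F whose gradient ∂_F H equals V. If each interface flux satisfies ⟨V_{i+1} − V_i, f*_{i+1/2}⟩ = χ_{i+1} − χ_i with χ_i = V_i · f(V_i) − h(V_i) evaluated at cell values, then d/dt H(F_i) = −(1/Δx)(h*_{i+1/2} − h*_{i−1/2}) where h*_{i±1/2} = ½(V_i + V_{i±1})·f*_{i±1/2} − ½(χ_i + χ_{i±1}). -/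
open scoped RealInnerProductSpace

/-!
Pairing the scheme with `∂_F H = V_i` gives `d/dt H(F_i) = −(1/Δx) ⟪V_i, f*_{i+1/2} − f*_{i−1/2}⟫`.
The entropy-conserving condition lets one move the pairing with `V_i` to the interface average:
`⟪V_i, f*_{i+1/2}⟫ − χ_i = h*_{i+1/2}` and `⟪V_i, f*_{i−1/2}⟫ − χ_i = h*_{i−1/2}`, so the `χ_i` cancel.
-/

namespace EntropyConservative

variable {E : Type*} [NormedAddCommGroup E] [InnerProductSpace ℝ E]

/-- `h*_{i+1/2}`, with the interface `i + 1/2` indexed by `i`. -/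
noncomputable def entropyFlux (V fstar : ℤ → E) (χ : ℤ → ℝ) (i : ℤ) : ℝ :=
  (1/2 : ℝ) * ⟪V i + V (i+1), fstar i⟫ - (1/2) * (χ i + χ (i+1))

variable {V fstar : ℤ → E} {χ : ℤ → ℝ} {i : ℤ}

theorem entropyFlux_eq_inner_left (hEC : ⟪V (i+1) - V i, fstar i⟫ = χ (i+1) - χ i) :
    entropyFlux V fstar χ i = ⟪V i, fstar i⟫ - χ i := by
  rw [inner_sub_left] at hEC
  rw [entropyFlux, inner_add_left]
  linarith

theorem entropyFlux_eq_inner_right (hEC : ⟪V (i+1) - V i, fstar i⟫ = χ (i+1) - χ i) :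
    entropyFlux V fstar χ i = ⟪V (i+1), fstar i⟫ - χ (i+1) := by
  rw [inner_sub_left] at hEC
  rw [entropyFlux, inner_add_left]
  linarith

theorem entropyFlux_sub
    (hEC : ⟪V (i+1) - V i, fstar i⟫ = χ (i+1) - χ i)
    (hEC' : ⟪V i - V (i-1), fstar (i-1)⟫ = χ i - χ (i-1)) :
    entropyFlux V fstar χ i - entropyFlux V fstar χ (i-1) = ⟪V i, fstar i - fstar (i-1)⟫ := by
  have hprev := entropyFlux_eq_inner_right (i := i - 1) (by simpa using hEC')
  rw [sub_add_cancel] at hprev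
  rw [entropyFlux_eq_inner_left hEC, hprev, inner_sub_right]
  ring

end EntropyConservative

theorem stmt_9_general {p : ℕ}
    (F : EuclideanSpace ℝ (Fin p) → EuclideanSpace ℝ (Fin p))
    (H : EuclideanSpace ℝ (Fin p) → ℝ)
    (Δx : ℝ)
    (V : ℝ → ℤ → EuclideanSpace ℝ (Fin p))
    (fstar : ℝ → ℤ → EuclideanSpace ℝ (Fin p))
    -- ∂_F H evaluated at F(V_i) is the entropy variable V_i :
    (hgrad : ∀ t i, HasFDerivAt H ((innerSL ℝ) (V t i)) (F (V t i)))
    -- the semi-discrete scheme (flux indexed by the cell to its left) :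
    (hscheme : ∀ t i, HasDerivAt (fun s => F (V s i))
        ((-(1/Δx)) • (fstar t i - fstar t (i-1))) t)
    (χ : ℝ → ℤ → ℝ)
    -- kinetic entropy-conserving condition at each interface :
    (hEC : ∀ t i, ⟪V t (i+1) - V t i, fstar t i⟫ = χ t (i+1) - χ t i)
    (hstar : ℝ → ℤ → ℝ)
    (hhstar : ∀ t i, hstar t i =
        (1/2 : ℝ) * ⟪V t i + V t (i+1), fstar t i⟫
          - (1/2) * (χ t i + χ t (i+1))) :
    ∀ t i, HasDerivAt (fun s => H (F (V s i)))
        ((-(1/Δx)) * (hstar t i - hstar t (i-1))) t := by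
  intro t i
  obtain rfl : hstar = fun t => EntropyConservative.entropyFlux (V t) (fstar t) (χ t) := by
    funext t i
    exact hhstar t i
  have hflux := EntropyConservative.entropyFlux_sub (hEC t i) (by simpa using hEC t (i-1))
  refine ((hgrad t i).comp_hasDerivAt t (hscheme t i)).congr_deriv ?_
  rw [hflux, innerSL_apply_apply, inner_smul_right]

/-- Semi-discrete kinetic entropy equality: for the scheme
`d/dt F_i = −(1/Δx)(f*_{i+1/2} − f*_{i−1/2})` with `∂_F H = V_i` at each
cell, if each interface flux satisfies the entropy-conserving condition
`⟨V_{i+1} − V_i, f*_{i+1/2}⟩ = χ_{i+1} − χ_i` with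
`χ_i = V_i·f(V_i) − h(V_i)`, then
`d/dt H(F_i) = −(1/Δx)(h*_{i+1/2} − h*_{i−1/2})` where
`h*_{i+1/2} = ½(V_i + V_{i+1})·f*_{i+1/2} − ½(χ_i + χ_{i+1})`. -/
theorem stmt_9 {p : ℕ}
    (F : EuclideanSpace ℝ (Fin p) → EuclideanSpace ℝ (Fin p))
    (H : EuclideanSpace ℝ (Fin p) → ℝ)
    (f : EuclideanSpace ℝ (Fin p) → EuclideanSpace ℝ (Fin p))
    (h : EuclideanSpace ℝ (Fin p) → ℝ)
    (Δx : ℝ) (hΔx : 0 < Δx)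
    (V : ℝ → ℤ → EuclideanSpace ℝ (Fin p))
    (fstar : ℝ → ℤ → EuclideanSpace ℝ (Fin p))
    -- ∂_F H evaluated at F(V_i) is the entropy variable V_i :
    (hgrad : ∀ t i, HasFDerivAt H ((innerSL ℝ) (V t i)) (F (V t i)))
    -- the semi-discrete scheme (flux indexed by the cell to its left) :
    (hscheme : ∀ t i, HasDerivAt (fun s => F (V s i))
        ((-(1/Δx)) • (fstar t i - fstar t (i-1))) t)
    (χ : ℝ → ℤ → ℝ)
    (hχ : ∀ t i, χ t i = ⟪V t i, f (V t i)⟫ - h (V t i))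
    -- kinetic entropy-conserving condition at each interface :
    (hEC : ∀ t i, ⟪V t (i+1) - V t i, fstar t i⟫ = χ t (i+1) - χ t i)
    (hstar : ℝ → ℤ → ℝ)
    (hhstar : ∀ t i, hstar t i =
        (1/2 : ℝ) * ⟪V t i + V t (i+1), fstar t i⟫
          - (1/2) * (χ t i + χ t (i+1))) :
    ∀ t i, HasDerivAt (fun s => H (F (V s i)))
        ((-(1/Δx)) * (hstar t i - hstar t (i-1))) t :=
  stmt_9_general F H Δx V fstar hgrad hscheme χ hEC hstar hhstar
end

section
/- Shallow water kinetic entropy-conserving flux: for states (ρ_i, u_i) and (ρ_{i+1}, u_{i+1}) (one space dimension, j = k = 1), let overbar denote the arithmetic average and [[·]] the jump. With constants a, b, v and entropy variables V = (2κρ − ½u², u), the flux f* = ( v ρ̄ (a + b ū), v( ρ̄ ū (a + b ū) + κ b \overline{ρ²} ) ) satisfies ⟨[[V]], f*⟩ = [[χ]], where χ = V · (v F) − v H, F(U) = aU + bG(U), H(U) = aη + bω, with G, η, ω the shallow water flux, entropy, and entropy flux with p = κρ². -/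
open Matrix
/-- Shallow water kinetic entropy-conserving flux (one space dimension):
with `V(ρ,u) = (2κρ − ½u², u)`, `F = aU + bG`, `H = aη + bω`,
`χ = V·(vF) − vH`, the flux
`f* = (v ρ̄ (a + b ū), v(ρ̄ ū (a + b ū) + κ b \overline{ρ²}))`
(overbars denoting arithmetic averages) satisfies `⟨[[V]], f*⟩ = [[χ]]`. -/
theorem stmt_14 (κ a b v : ℝ)
    (V : ℝ → ℝ → (Fin 2 → ℝ))
    (hV : V = fun ρ u => ![2 * κ * ρ - (1/2) * u^2, u])
    (F : ℝ → ℝ → (Fin 2 → ℝ))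
    (hF : F = fun ρ u => ![a * ρ + b * (ρ * u),
        a * (ρ * u) + b * (ρ * u^2 + κ * ρ^2)])
    (H : ℝ → ℝ → ℝ)
    (hH : H = fun ρ u => a * ((1/2) * ρ * u^2 + κ * ρ^2)
        + b * (u * ((1/2) * ρ * u^2 + 2 * κ * ρ^2)))
    (χ : ℝ → ℝ → ℝ)
    (hχ : χ = fun ρ u => (V ρ u) ⬝ᵥ (v • F ρ u) - v * H ρ u)
    (ρi ρ1 ui u1 : ℝ)
    (ρbar ubar ρsqbar : ℝ)
    (hρbar : ρbar = (ρi + ρ1) / 2) (hubar : ubar = (ui + u1) / 2)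
    (hρsqbar : ρsqbar = (ρi^2 + ρ1^2) / 2)
    (fstar : Fin 2 → ℝ)
    (hfstar : fstar = ![v * ρbar * (a + b * ubar),
        v * (ρbar * ubar * (a + b * ubar) + κ * b * ρsqbar)]) :
    (V ρ1 u1 - V ρi ui) ⬝ᵥ fstar = χ ρ1 u1 - χ ρi ui := by
  subst hV hF hH hχ hρbar hubar hρsqbar hfstar
  simp [dotProduct, Fin.sum_univ_two]
  ring
end
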